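/- arXiv:1002.0968 — 2 statements merged into one kernel-verified Lean document; each statement's English description precedes it below -/
import Mathlib

section
/- If f: M₁ → M₂ is a Q-module homomorphism, then f is residuated, and its residual f_*(m) = ⋁{n ∈ M₁ | f(n) ≤ m} satisfies f_*(q \_⋆ m) = q \_⋆ f_*(m) for all q ∈ Q and m ∈ M₂, i.e., f_* is a Q-module homomorphism between the dual modules M₂^op and M₁^op. -/
private lemma adj_aux {A B : Type*} [CompleteLattice A] [CompleteLattice B] (g : A → B)
    (hg : ∀ T : Set A, g (sSup T) = ⨆ m ∈ T, g m) :
    ∀ x y, g x ≤ y ↔ x ≤ sSup {n | g n ≤ y} := by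
  have mono : Monotone g := fun a b hab => by
    have h : g (sSup {a, b}) = ⨆ m ∈ ({a, b} : Set A), g m := hg _
    have hab' : sSup ({a, b} : Set A) = b := by
      rw [sSup_pair, sup_eq_right.mpr hab]
    rw [hab'] at h
    rw [h]
    exact le_iSup₂_of_le a (by simp) le_rfl
  intro x y
  constructor
  · intro h; exact le_sSup h
  · intro h
    calc g x ≤ g (sSup {n | g n ≤ y}) := mono h
      _ ≤ y := by rw [hg]; exact iSup₂_le fun n hn => hn

theorem stmt_14
    {Q M₁ M₂ : Type*} [CompleteLattice Q] [Monoid Q]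
    [CompleteLattice M₁] [CompleteLattice M₂]
    (hd₁ : ∀ (x : Q) (S : Set Q), x * sSup S = ⨆ y ∈ S, x * y)
    (hd₂ : ∀ (x : Q) (S : Set Q), sSup S * x = ⨆ y ∈ S, y * x)
    (s₁ : Q → M₁ → M₁) (s₂ : Q → M₂ → M₂)
    (hact₁ : ∀ (a b : Q) (m : M₁), s₁ (a * b) m = s₁ a (s₁ b m))
    (hdm₁ : ∀ (a : Q) (T : Set M₁), s₁ a (sSup T) = ⨆ m ∈ T, s₁ a m)
    (hdm₁' : ∀ (S : Set Q) (m : M₁), s₁ (sSup S) m = ⨆ a ∈ S, s₁ a m)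
    (hone₁ : ∀ m : M₁, s₁ 1 m = m)
    (hact₂ : ∀ (a b : Q) (m : M₂), s₂ (a * b) m = s₂ a (s₂ b m))
    (hdm₂ : ∀ (a : Q) (T : Set M₂), s₂ a (sSup T) = ⨆ m ∈ T, s₂ a m)
    (hdm₂' : ∀ (S : Set Q) (m : M₂), s₂ (sSup S) m = ⨆ a ∈ S, s₂ a m)
    (hone₂ : ∀ m : M₂, s₂ 1 m = m)
    (f : M₁ → M₂)
    (hfsup : ∀ T : Set M₁, f (sSup T) = ⨆ m ∈ T, f m)
    (hfact : ∀ (q : Q) (m : M₁), f (s₁ q m) = s₂ q (f m)) :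
    (∀ (x : M₁) (y : M₂), f x ≤ y ↔ x ≤ sSup {n : M₁ | f n ≤ y}) ∧
    (∀ (q : Q) (m : M₂),
      sSup {n : M₁ | f n ≤ sSup {k : M₂ | s₂ q k ≤ m}} =
        sSup {k : M₁ | s₁ q k ≤ sSup {n : M₁ | f n ≤ m}}) := by
  have hf := adj_aux f hfsup
  refine ⟨hf, fun q m => ?_⟩
  have h1 := adj_aux (s₁ q) (hdm₁ q)
  have h2 := adj_aux (s₂ q) (hdm₂ q)
  have key : ∀ x : M₁,
      (x ≤ sSup {n : M₁ | f n ≤ sSup {k : M₂ | s₂ q k ≤ m}}) ↔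
      (x ≤ sSup {k : M₁ | s₁ q k ≤ sSup {n : M₁ | f n ≤ m}}) := by
    intro x
    rw [← hf x, ← h2 (f x), ← hfact, hf (s₁ q x), ← h1 x]
  exact le_antisymm ((key _).1 le_rfl) ((key _).2 le_rfl)
end

section
/- Let Q be a unital quantale, p: X × Y → Q a strong coder, i.e., there is an injective ε: Y → X with p(ε(y), y) = e for all y and p(ε(y₁), y₂) = ⊥ whenever y₁ ≠ y₂. Then H_p ∘ Λ_p = id on Q^Y; hence H_p is surjective and Λ_p injective. Here H_p f(y) = ⋁_{x∈X} f(x)·p(x,y) and Λ_p g(x) = ⋀_{y∈Y} g(y)/p(x,y). -/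
theorem stmt_19
    {Q : Type*} [CompleteLattice Q] [Monoid Q]
    (hd₁ : ∀ (x : Q) (S : Set Q), x * sSup S = ⨆ y ∈ S, x * y)
    (hd₂ : ∀ (x : Q) (S : Set Q), sSup S * x = ⨆ y ∈ S, y * x)
    {X Y : Type*} [Nonempty X] [Nonempty Y] (p : X × Y → Q)
    (ε : Y → X) (hinj : Function.Injective ε)
    (hnorm : ∀ y : Y, p (ε y, y) = 1)
    (hstrong : ∀ y₁ y₂ : Y, y₁ ≠ y₂ → p (ε y₁, y₂) = ⊥) :
    letI H : (X → Q) → (Y → Q) := fun f y => ⨆ x : X, f x * p (x, y)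
    letI Lam : (Y → Q) → (X → Q) := fun g x => ⨅ y : Y, sSup {z : Q | z * p (x, y) ≤ g y}
    (∀ g : Y → Q, H (Lam g) = g) ∧
      Function.Surjective H ∧ Function.Injective Lam := by
  set H : (X → Q) → (Y → Q) := fun f y => ⨆ x : X, f x * p (x, y) with hH
  set Lam : (Y → Q) → (X → Q) := fun g x => ⨅ y : Y, sSup {z : Q | z * p (x, y) ≤ g y} with hL
  have hmono : ∀ (a b c : Q), a ≤ b → a * c ≤ b * c := by
    intro a b c h
    have h2 := hd₂ c ({a, b} : Set Q)
    rw [sSup_pair, sup_eq_right.mpr h] at h2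
    rw [h2]
    exact le_iSup₂ (f := fun y _ => y * c) a (Set.mem_insert a {b})
  have hbot : ∀ a : Q, a * ⊥ = ⊥ := by
    intro a
    have := hd₁ a ∅
    simpa using this
  have hres : ∀ (g : Y → Q) (x : X) (y : Y),
      sSup {z : Q | z * p (x, y) ≤ g y} * p (x, y) ≤ g y := by
    intro g x y
    rw [hd₂]
    exact iSup₂_le fun z hz => hz
  have key : ∀ g : Y → Q, H (Lam g) = g := by
    intro g
    funext y
    apply le_antisymm
    · apply iSup_le
      intro x
      calc Lam g x * p (x, y) ≤ sSup {z : Q | z * p (x, y) ≤ g y} * p (x, y) := by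
            exact hmono _ _ _ (iInf_le _ y)
        _ ≤ g y := hres g x y
    · have h1 : g y ≤ Lam g (ε y) := by
        apply le_iInf
        intro y'
        apply le_sSup
        by_cases h : y = y'
        · subst h; simp [hnorm y]
        · show g y * p (ε y, y') ≤ g y'
          rw [hstrong y y' h, hbot]
          exact bot_le
      calc g y = g y * 1 := (mul_one _).symm
        _ ≤ Lam g (ε y) * p (ε y, y) := by rw [hnorm]; exact hmono _ _ _ h1
        _ ≤ ⨆ x : X, Lam g x * p (x, y) := le_iSup (fun x => Lam g x * p (x, y)) (ε y)
  refine ⟨key, fun g => ⟨Lam g, key g⟩, fun g₁ g₂ h => ?_⟩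
  have := congrArg H h
  rwa [key, key] at this
end
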